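/- Fix η0, x, β ∈ ℝ and σ > 0. Let Y_1, Y_2, … be i.i.d. {0,1}-valued random variables with P(Y_j = 1) = Φ(η0). For each m let g_m(η) = (∏_{j=1}^m f(Y_j|η)) σ^{−1} φ((η − βx)/σ), and suppose η̂_m are random variables satisfying g_m(η̂_m) = sup_{η∈ℝ} g_m(η) for all m (maximizers of the non-normalised posterior density). Then η̂_m converges in probability to η0 as m → ∞. -/

import Mathlib

open MeasureTheory Filter Real ProbabilityTheory

/-- The standard normal density `φ(s) = exp(−s²/2)/√(2π)`. -/
noncomputable def stdPhi (s : ℝ) : ℝ := Real.exp (-s ^ 2 / 2) / Real.sqrt (2 * Real.pi)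

/-- The standard normal CDF `Φ(t) = ∫_{−∞}^t φ(s) ds`. -/
noncomputable def stdPhiCDF (t : ℝ) : ℝ := ∫ s in Set.Iic t, stdPhi s

/-- The probit Bernoulli density `f(y|η) = Φ(η)^y (1−Φ(η))^{1−y}` for `y ∈ {0,1}`. -/
noncomputable def probitDens (y η : ℝ) : ℝ := if y = 1 then stdPhiCDF η else 1 - stdPhiCDF η

/-- The mixed-model likelihood contribution
`L_m(β,σ;y,x) = ∫ (∏_{j<m} f(y_j|η)) σ⁻¹ φ((η−βx)/σ) dη`. -/
noncomputable def Lcontrib (m : ℕ) (β σ : ℝ) (y : ℕ → ℝ) (x : ℝ) : ℝ :=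
  ∫ η : ℝ, (∏ j ∈ Finset.range m, probitDens (y j) η) * (σ⁻¹ * stdPhi ((η - β * x) / σ))

/-!
Each factor `f(Y_j | η)` is `Φ(η)` or `1 - Φ(η)`, so
`log g_m(η) = m · ℓ(t_m, Φ(η)) + log(σ⁻¹ φ((η - βx)/σ))`, where `t_m` is the frequency of ones
among `Y_1, …, Y_m` and `ℓ(t, q) = t log q + (1 - t) log (1 - q)` increases strictly in `q` up to
`q = t` and decreases strictly after it. By the strong law `t_m → Φ(η0)` almost surely; then for
`|η - η0| ≥ ε` the likelihood term falls short of its value at `η0` by some `c · m`, which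
eventually exceeds the bounded log-ratio of the prior factors. So `η̂_m → η0` almost surely, hence
in probability.
-/

open Finset Set Topology

lemma stdPhi_eq_gaussianPDFReal : stdPhi = gaussianPDFReal 0 1 := by
  ext s
  simp [stdPhi, gaussianPDFReal, div_eq_inv_mul]

lemma stdPhi_pos (s : ℝ) : 0 < stdPhi s := by
  unfold stdPhi
  positivity

lemma stdPhi_le_stdPhi_zero (s : ℝ) : stdPhi s ≤ stdPhi 0 := by
  unfold stdPhi
  gcongr exp ?_ / _
  nlinarith [sq_nonneg s]

lemma integrable_stdPhi : Integrable stdPhi := by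
  rw [stdPhi_eq_gaussianPDFReal]
  exact integrable_gaussianPDFReal 0 1

lemma setIntegral_stdPhi_pos {s : Set ℝ} (h : volume s ≠ 0) :
    0 < ∫ u in s, stdPhi u := by
  rw [setIntegral_pos_iff_support_of_nonneg_ae (.of_forall fun u => (stdPhi_pos u).le)
    integrable_stdPhi.integrableOn, Function.support_eq_univ fun u => (stdPhi_pos u).ne',
    univ_inter]
  exact pos_iff_ne_zero.2 h

lemma stdPhiCDF_pos (t : ℝ) : 0 < stdPhiCDF t :=
  setIntegral_stdPhi_pos (by simp)

lemma stdPhiCDF_lt_one (t : ℝ) : stdPhiCDF t < 1 := by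
  have hsplit : stdPhiCDF t + ∫ u in Ioi t, stdPhi u = 1 := by
    rw [stdPhiCDF, intervalIntegral.integral_Iic_add_Ioi integrable_stdPhi.integrableOn
      integrable_stdPhi.integrableOn, stdPhi_eq_gaussianPDFReal]
    exact integral_gaussianPDFReal_eq_one 0 one_ne_zero
  linarith [setIntegral_stdPhi_pos (s := Ioi t) (by simp)]

lemma stdPhiCDF_strictMono : StrictMono stdPhiCDF := by
  intro a b hab
  have hdiff : stdPhiCDF b - stdPhiCDF a = ∫ u in Ioc a b, stdPhi u := by
    rw [stdPhiCDF, stdPhiCDF, intervalIntegral.integral_Iic_sub_Iic integrable_stdPhi.integrableOn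
      integrable_stdPhi.integrableOn, intervalIntegral.integral_of_le hab.le]
  linarith [setIntegral_stdPhi_pos (s := Ioc a b) (by simp [hab])]

lemma probitDens_pos (y η : ℝ) : 0 < probitDens y η := by
  unfold probitDens
  split_ifs
  · exact stdPhiCDF_pos η
  · linarith [stdPhiCDF_lt_one η]

lemma probitDens_le_one (y η : ℝ) : probitDens y η ≤ 1 := by
  unfold probitDens
  split_ifs
  · exact (stdPhiCDF_lt_one η).le
  · linarith [stdPhiCDF_pos η]

noncomputable def bernoulliLogLik (t q : ℝ) : ℝ := t * log q + (1 - t) * log (1 - q)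

lemma bernoulliLogLik_one_sub (t q : ℝ) :
    bernoulliLogLik (1 - t) (1 - q) = bernoulliLogLik t q := by
  simp only [bernoulliLogLik, sub_sub_cancel]
  ring

lemma hasDerivAt_bernoulliLogLik (t : ℝ) {q : ℝ} (hq0 : 0 < q) (hq1 : q < 1) :
    HasDerivAt (bernoulliLogLik t) (t / q - (1 - t) / (1 - q)) q := by
  have hlog₁ := ((hasDerivAt_id q).const_sub 1).log (sub_pos.2 hq1).ne'
  refine (((hasDerivAt_log hq0.ne').const_mul t).add (hlog₁.const_mul (1 - t))).congr_deriv ?_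
  simp only [id]
  ring

lemma bernoulliLogLik_strictMonoOn {t : ℝ} (ht : t < 1) :
    StrictMonoOn (bernoulliLogLik t) (Ioc 0 t) := by
  refine strictMonoOn_of_deriv_pos (convex_Ioc 0 t) (fun q hq => ?_) (fun q hq => ?_)
  · exact (hasDerivAt_bernoulliLogLik t hq.1 (hq.2.trans_lt ht)).continuousAt.continuousWithinAt
  · rw [interior_Ioc] at hq
    have hq1 : 0 < 1 - q := by linarith [hq.2]
    rw [(hasDerivAt_bernoulliLogLik t hq.1 (by linarith)).deriv, sub_pos,
      div_lt_div_iff₀ hq1 hq.1]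
    nlinarith [hq.2]

lemma bernoulliLogLik_strictAntiOn {t : ℝ} (ht : 0 < t) :
    StrictAntiOn (bernoulliLogLik t) (Ico t 1) := by
  intro a ha b hb hab
  rw [← bernoulliLogLik_one_sub t a, ← bernoulliLogLik_one_sub t b]
  exact bernoulliLogLik_strictMonoOn (by linarith) ⟨by linarith [hb.2], by linarith [ha.1]⟩
    ⟨by linarith [ha.2], by linarith [ha.1]⟩ (by linarith)

lemma exists_pos_eventually_bernoulliLogLik_add_le {qm p qp : ℝ} (h0 : 0 < qm) (hm : qm < p)
    (hp : p < qp) (h1 : qp < 1) :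
    ∃ c > 0, ∀ᶠ t in 𝓝 p, ∀ q ∈ Ioo (0 : ℝ) 1, q ≤ qm ∨ qp ≤ q →
      bernoulliLogLik t q + c ≤ bernoulliLogLik t p := by
  have hgap_m : bernoulliLogLik p qm < bernoulliLogLik p p :=
    bernoulliLogLik_strictMonoOn (hp.trans h1) ⟨h0, hm.le⟩ ⟨h0.trans hm, le_rfl⟩ hm
  have hgap_p : bernoulliLogLik p qp < bernoulliLogLik p p :=
    bernoulliLogLik_strictAntiOn (h0.trans hm) ⟨le_rfl, hp.trans h1⟩ ⟨hp.le, h1⟩ hp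
  obtain ⟨d, hd, hd_lt⟩ := exists_between (lt_min (sub_pos.2 hgap_m) (sub_pos.2 hgap_p))
  have hnear : ∀ q, d < bernoulliLogLik p p - bernoulliLogLik p q →
      ∀ᶠ t in 𝓝 p, d < bernoulliLogLik t p - bernoulliLogLik t q := fun q hq => by
    have hcont : Continuous fun t => bernoulliLogLik t p - bernoulliLogLik t q := by
      unfold bernoulliLogLik
      fun_prop
    exact hcont.continuousAt.eventually (lt_mem_nhds hq)
  refine ⟨d, hd, ?_⟩
  filter_upwards [hnear qm (lt_min_iff.1 hd_lt).1, hnear qp (lt_min_iff.1 hd_lt).2,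
    Ioo_mem_nhds hm hp] with t htm htp ht q hq hside
  rcases hside with hle | hge
  · have := (bernoulliLogLik_strictMonoOn (ht.2.trans h1)).monotoneOn
      ⟨hq.1, hle.trans ht.1.le⟩ ⟨h0, ht.1.le⟩ hle
    linarith
  · have := (bernoulliLogLik_strictAntiOn (h0.trans ht.1)).antitoneOn
      ⟨ht.2.le, h1⟩ ⟨ht.2.le.trans hge, hq.2⟩ hge
    linarith

noncomputable def probitPosterior (y : ℕ → ℝ) (β x σ : ℝ) (m : ℕ) (η : ℝ) : ℝ :=
  (∏ j ∈ range m, probitDens (y j) η) * (σ⁻¹ * stdPhi ((η - β * x) / σ))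

lemma log_probitDens {y : ℝ} (hy : y = 0 ∨ y = 1) (η : ℝ) :
    log (probitDens y η) = y * log (stdPhiCDF η) + (1 - y) * log (1 - stdPhiCDF η) := by
  rcases hy with rfl | rfl <;> simp [probitDens]

lemma log_prod_probitDens {y : ℕ → ℝ} (hy : ∀ j, y j = 0 ∨ y j = 1) {m : ℕ} (hm : 0 < m)
    (η : ℝ) :
    log (∏ j ∈ range m, probitDens (y j) η) =
      m * bernoulliLogLik ((∑ j ∈ range m, y j) / m) (stdPhiCDF η) := by
  rw [log_prod fun j _ => (probitDens_pos (y j) η).ne']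
  simp only [log_probitDens (hy _), bernoulliLogLik, sum_add_distrib, ← sum_mul, sum_sub_distrib,
    sum_const, card_range, nsmul_eq_mul, mul_one]
  field_simp

lemma log_probitPosterior {y : ℕ → ℝ} (hy : ∀ j, y j = 0 ∨ y j = 1) (β x : ℝ) {σ : ℝ}
    (hσ : 0 < σ) {m : ℕ} (hm : 0 < m) (η : ℝ) :
    log (probitPosterior y β x σ m η) =
      m * bernoulliLogLik ((∑ j ∈ range m, y j) / m) (stdPhiCDF η) +
        log (σ⁻¹ * stdPhi ((η - β * x) / σ)) := by
  rw [probitPosterior, log_mul (prod_pos fun j _ => probitDens_pos (y j) η).ne'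
    (mul_pos (inv_pos.2 hσ) (stdPhi_pos _)).ne', log_prod_probitDens hy hm]

lemma probitPosterior_pos (y : ℕ → ℝ) (β x : ℝ) {σ : ℝ} (hσ : 0 < σ) (m : ℕ) (η : ℝ) :
    0 < probitPosterior y β x σ m η := by
  unfold probitPosterior
  exact mul_pos (prod_pos fun j _ => probitDens_pos (y j) η)
    (mul_pos (inv_pos.2 hσ) (stdPhi_pos _))

lemma probitPosterior_le (y : ℕ → ℝ) (β x : ℝ) {σ : ℝ} (hσ : 0 < σ) (m : ℕ) (η : ℝ) :
    probitPosterior y β x σ m η ≤ σ⁻¹ * stdPhi 0 := by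
  unfold probitPosterior
  have hprod : ∏ j ∈ range m, probitDens (y j) η ≤ 1 :=
    prod_le_one (fun j _ => (probitDens_pos (y j) η).le) fun j _ => probitDens_le_one (y j) η
  have hprior : σ⁻¹ * stdPhi ((η - β * x) / σ) ≤ σ⁻¹ * stdPhi 0 :=
    mul_le_mul_of_nonneg_left (stdPhi_le_stdPhi_zero _) (inv_pos.2 hσ).le
  simpa using mul_le_mul hprod hprior (mul_pos (inv_pos.2 hσ) (stdPhi_pos _)).le zero_le_one

theorem tendsto_of_isMaxOn_probitPosterior {y : ℕ → ℝ} (hy : ∀ j, y j = 0 ∨ y j = 1)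
    {η0 β x σ : ℝ} (hσ : 0 < σ)
    (hfreq : Tendsto (fun m : ℕ => (∑ j ∈ range m, y j) / m) atTop (𝓝 (stdPhiCDF η0)))
    {η : ℕ → ℝ} (hη : ∀ m, IsMaxOn (probitPosterior y β x σ m) univ (η m)) :
    Tendsto η atTop (𝓝 η0) := by
  rw [Metric.tendsto_nhds]
  intro ε hε
  obtain ⟨c, hc, hgap⟩ := exists_pos_eventually_bernoulliLogLik_add_le (stdPhiCDF_pos (η0 - ε))
    (stdPhiCDF_strictMono (sub_lt_self η0 hε)) (stdPhiCDF_strictMono (lt_add_of_pos_right η0 hε))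
    (stdPhiCDF_lt_one (η0 + ε))
  have hmc : Tendsto (fun m : ℕ => (m : ℝ) * c) atTop atTop :=
    tendsto_natCast_atTop_atTop.atTop_mul_const hc
  filter_upwards [hfreq.eventually hgap, eventually_gt_atTop 0,
    hmc.eventually_gt_atTop (log (σ⁻¹ * stdPhi 0) - log (σ⁻¹ * stdPhi ((η0 - β * x) / σ)))]
    with m hsep hm hmc_m
  by_contra hfar
  rw [Real.dist_eq, not_lt] at hfar
  have hside : stdPhiCDF (η m) ≤ stdPhiCDF (η0 - ε) ∨ stdPhiCDF (η0 + ε) ≤ stdPhiCDF (η m) := by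
    rcases le_abs'.1 hfar with h | h
    · exact Or.inl (stdPhiCDF_strictMono.monotone (by linarith))
    · exact Or.inr (stdPhiCDF_strictMono.monotone (by linarith))
  have hlik := mul_le_mul_of_nonneg_left
    (hsep (stdPhiCDF (η m)) ⟨stdPhiCDF_pos _, stdPhiCDF_lt_one _⟩ hside) (Nat.cast_nonneg m)
  have hprior : log (σ⁻¹ * stdPhi ((η m - β * x) / σ)) ≤ log (σ⁻¹ * stdPhi 0) :=
    log_le_log (mul_pos (inv_pos.2 hσ) (stdPhi_pos _))
      (mul_le_mul_of_nonneg_left (stdPhi_le_stdPhi_zero _) (inv_pos.2 hσ).le)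
  have hlt : log (probitPosterior y β x σ m (η m)) < log (probitPosterior y β x σ m η0) := by
    rw [log_probitPosterior hy β x hσ hm, log_probitPosterior hy β x hσ hm]
    linarith [mul_add (m : ℝ) (bernoulliLogLik ((∑ j ∈ range m, y j) / m) (stdPhiCDF (η m))) c]
  rw [log_lt_log_iff (probitPosterior_pos y β x hσ m _) (probitPosterior_pos y β x hσ m _)] at hlt
  exact (hη m (mem_univ η0)).not_gt hlt

lemma eq_indicator_of_zero_or_one {Ω : Type*} {f : Ω → ℝ} (hf : ∀ ω, f ω = 0 ∨ f ω = 1) :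
    f = {ω | f ω = 1}.indicator fun _ => 1 := by
  ext ω
  rcases hf ω with h | h <;> simp [h]

lemma identDistrib_of_zero_or_one {Ω : Type*} [MeasurableSpace Ω] (P : Measure Ω)
    [IsProbabilityMeasure P] {f g : Ω → ℝ} (hf : Measurable f) (hg : Measurable g)
    (hf01 : ∀ ω, f ω = 0 ∨ f ω = 1) (hg01 : ∀ ω, g ω = 0 ∨ g ω = 1)
    (hfg : P {ω | f ω = 1} = P {ω | g ω = 1}) :
    IdentDistrib f g P P := by
  classical
  refine ⟨hf.aemeasurable, hg.aemeasurable, Measure.ext fun s hs => ?_⟩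
  have hA : MeasurableSet {ω | f ω = 1} := hf (measurableSet_singleton 1)
  have hB : MeasurableSet {ω | g ω = 1} := hg (measurableSet_singleton 1)
  rw [Measure.map_apply hf hs, Measure.map_apply hg hs, eq_indicator_of_zero_or_one hf01,
    eq_indicator_of_zero_or_one hg01]
  simp only [indicator_const_preimage_eq_union]
  split_ifs <;> simp [prob_compl_eq_one_sub hA, prob_compl_eq_one_sub hB, hfg]

/-- Any maximizer of the non-normalised posterior density of the linear predictor converges in
probability to the true value η0. -/
theorem stmt5 {Ω : Type*} [MeasurableSpace Ω] (P : Measure Ω) [IsProbabilityMeasure P]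
    (η0 x β σ : ℝ) (hσ : 0 < σ)
    (Y : ℕ → Ω → ℝ) (hmeas : ∀ j, Measurable (Y j))
    (hindep : iIndepFun Y P)
    (hval : ∀ j ω, Y j ω = 0 ∨ Y j ω = 1)
    (hdist : ∀ j, P {ω | Y j ω = 1} = ENNReal.ofReal (stdPhiCDF η0))
    (ηhat : ℕ → Ω → ℝ) (hηhatmeas : ∀ m, Measurable (ηhat m))
    (hmax : ∀ m ω,
      (∏ j ∈ Finset.range m, probitDens (Y j ω) (ηhat m ω)) *
          (σ⁻¹ * stdPhi ((ηhat m ω - β * x) / σ)) =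
        ⨆ η : ℝ, (∏ j ∈ Finset.range m, probitDens (Y j ω) η) * (σ⁻¹ * stdPhi ((η - β * x) / σ))) :
    ∀ ε > 0,
      Tendsto (fun m => P {ω | ε < |ηhat m ω - η0|}) atTop (nhds 0) := by
  have hY0 : MeasurableSet {ω | Y 0 ω = 1} := hmeas 0 (measurableSet_singleton 1)
  have hint : Integrable (Y 0) P := by
    rw [eq_indicator_of_zero_or_one (hval 0)]
    exact (integrable_const 1).indicator hY0
  have hmean : P[Y 0] = stdPhiCDF η0 := by
    rw [eq_indicator_of_zero_or_one (hval 0), integral_indicator_const 1 hY0, measureReal_def,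
      hdist 0, ENNReal.toReal_ofReal (stdPhiCDF_pos η0).le, smul_eq_mul, mul_one]
  have hLLN := strong_law_ae_real Y hint (fun i j hij => hindep.indepFun hij) fun i =>
    identDistrib_of_zero_or_one P (hmeas i) (hmeas 0) (hval i) (hval 0) (by rw [hdist, hdist])
  rw [hmean] at hLLN
  have hae : ∀ᵐ ω ∂P, Tendsto (ηhat · ω) atTop (𝓝 η0) := by
    filter_upwards [hLLN] with ω hfreq
    refine tendsto_of_isMaxOn_probitPosterior (β := β) (x := x) (fun j => hval j ω) hσ hfreq
      fun m e _ => ?_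
    have hbdd : BddAbove (Set.range (probitPosterior (Y · ω) β x σ m)) :=
      ⟨σ⁻¹ * stdPhi 0, forall_mem_range.2 (probitPosterior_le _ β x hσ m)⟩
    exact (le_ciSup hbdd e).trans_eq (hmax m ω).symm
  intro ε hε
  have hprob := tendstoInMeasure_iff_dist.1
    (tendstoInMeasure_of_tendsto_ae (fun m => (hηhatmeas m).aestronglyMeasurable) hae) ε hε
  refine tendsto_of_tendsto_of_tendsto_of_le_of_le tendsto_const_nhds hprob (fun _ => zero_le)
    fun m => measure_mono fun ω hω => ?_
  simpa only [mem_ofPred_eq, Real.dist_eq] using hω.le
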